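/- arXiv:1912.10177 — 5 statements merged into one kernel-verified Lean document; each statement's English description precedes it below -/
import Mathlib

section
/- Let q be a prime power and n an odd positive integer. Let ω₀ be an element of order (qⁿ+1)(q−1) in the multiplicative group of the field with q^{2n} elements, and let ω = ω₀^{q−1}. Set W = F_{qⁿ}* · ⟨ω⟩ (the set of products of a nonzero element of the subfield F_{qⁿ} with a power of ω). Then if q is even, W equals the full multiplicative group F_{q^{2n}}*; and if q is odd, F_{q^{2n}}* is the disjoint union of W and Wω₀. -/
/-!
The nonzero fixed points of `a ↦ a ^ qⁿ` are the `(qⁿ - 1)`-th roots of unity and `⟨ω⟩` is the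
group of `(qⁿ + 1)`-th roots of unity, so by Bézout `W` consists exactly of the solutions of
`x ^ L = 1`, `L = lcm (qⁿ - 1) (qⁿ + 1)`. Every nonzero `x` satisfies `x ^ ((qⁿ - 1)(qⁿ + 1)) = 1`.
For even `q` the two factors are coprime, so `W` is everything. For odd `q` their gcd is `2`, so
`x ^ L = ±1` and `W` has index at most two; it remains to see `ω₀ ^ L ≠ 1`, which amounts to
`2 (q - 1) ∤ qⁿ - 1`.
-/

theorem Nat.gcd_sub_one_add_one {k : ℕ} (hk : k ≠ 0) :
    Nat.gcd (k - 1) (k + 1) = Nat.gcd (k - 1) 2 := by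
  rw [show k + 1 = 2 + (k - 1) by omega, Nat.gcd_add_self_right]

theorem Nat.lcm_sub_one_add_one_of_even {k : ℕ} (hk : k ≠ 0) (he : Even k) :
    Nat.lcm (k - 1) (k + 1) = (k - 1) * (k + 1) := by
  refine Nat.Coprime.lcm_eq_mul ?_
  rw [Nat.Coprime, Nat.gcd_sub_one_add_one hk, ← Nat.Coprime, Nat.coprime_two_right]
  exact Nat.Even.sub_odd (by omega) he odd_one

theorem Nat.two_mul_lcm_sub_one_add_one_of_odd {k : ℕ} (ho : Odd k) :
    2 * Nat.lcm (k - 1) (k + 1) = (k - 1) * (k + 1) := by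
  have h := Nat.gcd_mul_lcm (k - 1) (k + 1)
  rwa [Nat.gcd_sub_one_add_one ho.pos.ne',
    Nat.gcd_eq_right (even_iff_two_dvd.mp (Nat.Odd.sub_odd ho odd_one))] at h

/-- As `2 (q - 1) ∣ q ^ 2 - 1`, odd `n` gives `q ^ n ≡ q` modulo `2 (q - 1)`. -/
theorem Nat.not_two_mul_sub_one_dvd_pow_sub_one {q n : ℕ} (hq : Odd q) (hq1 : 1 < q)
    (hn : Odd n) : ¬ 2 * (q - 1) ∣ q ^ n - 1 := by
  obtain ⟨r, rfl⟩ := hn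
  have hsq : 2 * (q - 1) ∣ (q ^ 2) ^ r - 1 := by
    refine Dvd.dvd.trans ?_ (by simpa only [one_pow] using Nat.sub_dvd_pow_sub_pow (q ^ 2) 1 r)
    rw [show q ^ 2 - 1 = (q + 1) * (q - 1) by simpa using Nat.sq_sub_sq q 1]
    exact mul_dvd_mul_right (even_iff_two_dvd.mp hq.add_one) _
  have hsplit : q ^ (2 * r + 1) - 1 = q * ((q ^ 2) ^ r - 1) + (q - 1) := by
    have : 1 ≤ (q ^ 2) ^ r := Nat.one_le_pow _ _ (by positivity)
    zify [this, hq1.le, Nat.one_le_pow (2 * r + 1) q (by omega)]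
    ring
  intro h
  rw [hsplit, Nat.dvd_add_right (hsq.mul_left q)] at h
  have := Nat.le_of_dvd (by omega) h
  omega

theorem Nat.not_pow_add_one_mul_sub_one_dvd_lcm {q n : ℕ} (hq : Odd q) (hq1 : 1 < q)
    (hn : Odd n) : ¬ (q ^ n + 1) * (q - 1) ∣ Nat.lcm (q ^ n - 1) (q ^ n + 1) := by
  intro h
  apply Nat.not_two_mul_sub_one_dvd_pow_sub_one hq hq1 hn
  have h2 : 2 * (q - 1) * (q ^ n + 1) ∣ (q ^ n - 1) * (q ^ n + 1) := by
    rw [← Nat.two_mul_lcm_sub_one_add_one_of_odd hq.pow, mul_right_comm, mul_assoc]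
    exact mul_dvd_mul_left 2 h
  exact Nat.dvd_of_mul_dvd_mul_right (Nat.succ_pos _) h2

theorem exists_mul_eq_of_pow_lcm_eq_one {G : Type*} [CommGroup G] {a b : ℕ} {x : G}
    (hx : x ^ Nat.lcm a b = 1) : ∃ y z : G, y ^ a = 1 ∧ z ^ b = 1 ∧ y * z = x := by
  rcases Nat.eq_zero_or_pos (Nat.gcd a b) with hg | hg
  · exact ⟨x, 1, by rw [(Nat.gcd_eq_zero_iff.mp hg).1, pow_zero], one_pow b, mul_one x⟩
  obtain ⟨g, a, b, -, hco, rfl, rfl⟩ := Nat.exists_coprime' hg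
  obtain ⟨u, v, huv⟩ := Nat.isCoprime_iff_coprime.mpr hco
  rw [Nat.lcm_mul_right, hco.lcm_eq_mul] at hx
  have hx' : ∀ c : ℤ, x ^ ((a * b * g : ℕ) * c) = 1 := fun c => by
    rw [zpow_mul, zpow_natCast, hx, one_zpow]
  refine ⟨x ^ (v * b), x ^ (u * a), ?_, ?_, ?_⟩
  · rw [← zpow_natCast, ← zpow_mul, ← hx' v]
    congr 1; push_cast; ring
  · rw [← zpow_natCast, ← zpow_mul, ← hx' u]
    congr 1; push_cast; ring
  · rw [← zpow_add, add_comm, huv, zpow_one]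

theorem pow_eq_self_iff_pow_sub_one_eq_one {M₀ : Type*} [MonoidWithZero M₀]
    [IsRightCancelMulZero M₀] {k : ℕ} (hk : k ≠ 0) {a : M₀} (ha : a ≠ 0) :
    a ^ k = a ↔ a ^ (k - 1) = 1 := by
  rw [← pow_sub_one_mul hk, mul_eq_right₀ ha]

theorem IsPrimitiveRoot.pow_of_orderOf_eq_mul {M : Type*} [CommMonoid M] {ζ : M} {m d : ℕ}
    (h : orderOf ζ = m * d) (hd : d ≠ 0) : IsPrimitiveRoot (ζ ^ d) m := by
  have hζ := (IsPrimitiveRoot.orderOf ζ).pow_of_dvd hd (h ▸ dvd_mul_left d m)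
  rwa [h, Nat.mul_div_cancel _ (Nat.pos_of_ne_zero hd)] at hζ

section Field

variable {F : Type*} [Field F]

/-- For `k = qⁿ`, membership in `W = F_{qⁿ}* · ⟨ω⟩`. -/
def IsFixedMulPow (k : ℕ) (ω x : F) : Prop :=
  ∃ a : F, a ≠ 0 ∧ a ^ k = a ∧ ∃ i : ℕ, x = a * ω ^ i

theorem isFixedMulPow_iff_pow_lcm_eq_one {k m : ℕ} [NeZero m] {ω x : F} (hk : k ≠ 0)
    (hω : IsPrimitiveRoot ω m) (hx : x ≠ 0) :
    IsFixedMulPow k ω x ↔ x ^ Nat.lcm (k - 1) m = 1 := by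
  constructor
  · rintro ⟨a, ha, hak, i, rfl⟩
    obtain ⟨c, hc⟩ := Nat.dvd_lcm_left (k - 1) m
    obtain ⟨d, hd⟩ := Nat.dvd_lcm_right (k - 1) m
    rw [mul_pow, hc, pow_mul, (pow_eq_self_iff_pow_sub_one_eq_one hk ha).mp hak, one_pow, one_mul,
      ← hc, hd, ← pow_mul, mul_comm i, pow_mul, pow_mul, hω.pow_eq_one, one_pow, one_pow]
  · intro h
    obtain ⟨y, z, hy, hz, hyz⟩ := exists_mul_eq_of_pow_lcm_eq_one (x := Units.mk0 x hx)
      (by ext; simpa using h)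
    obtain ⟨i, -, hi⟩ := hω.eq_pow_of_pow_eq_one (ξ := (z : F))
      (by simpa using congrArg Units.val hz)
    refine ⟨y, y.ne_zero, (pow_eq_self_iff_pow_sub_one_eq_one hk y.ne_zero).mpr ?_, i, ?_⟩
    · simpa using congrArg Units.val hy
    · rw [hi, ← Units.val_mul, hyz, Units.val_mk0]

theorem exists_eq_mul_mul_iff_isFixedMulPow_div {k : ℕ} {ω ω₀ x : F} (hω₀ : ω₀ ≠ 0) :
    (∃ a : F, a ≠ 0 ∧ a ^ k = a ∧ ∃ i : ℕ, x = a * ω ^ i * ω₀) ↔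
      IsFixedMulPow k ω (x / ω₀) := by
  simp only [IsFixedMulPow, div_eq_iff hω₀]

theorem pow_eq_one_xor_div_pow_eq_one {L : ℕ} {ω₀ x : F}
    (hsq : ∀ y : F, y ≠ 0 → y ^ (2 * L) = 1) (hω₀ : ω₀ ≠ 0) (hω₀L : ω₀ ^ L ≠ 1) (hx : x ≠ 0) :
    (x ^ L = 1 ∧ (x / ω₀) ^ L ≠ 1) ∨ (x ^ L ≠ 1 ∧ (x / ω₀) ^ L = 1) := by
  have hsign : ∀ y : F, y ≠ 0 → y ^ L = 1 ∨ y ^ L = -1 := fun y hy =>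
    sq_eq_one_iff.mp (by rw [← pow_mul, mul_comm]; exact hsq y hy)
  have hω₀L' : ω₀ ^ L = -1 := (hsign ω₀ hω₀).resolve_left hω₀L
  have hne : (1 : F) ≠ -1 := hω₀L' ▸ hω₀L.symm
  rw [div_pow, Ne, div_eq_one_iff_eq (pow_ne_zero L hω₀), hω₀L']
  rcases hsign x hx with h | h
  · exact Or.inl ⟨h, h ▸ hne⟩
  · exact Or.inr ⟨h ▸ hne.symm, h⟩

end Field

theorem stmt0_general {q n : ℕ} (hn : Odd n)
    {F : Type*} [Field F] [Fintype F] (hF : Fintype.card F = q ^ (2 * n))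
    (ω₀ ω : F) (hω₀ : orderOf ω₀ = (q ^ n + 1) * (q - 1)) (hω : ω = ω₀ ^ (q - 1)) :
    (Even q → ∀ x : F, x ≠ 0 →
      (∃ a : F, a ≠ 0 ∧ a ^ (q ^ n) = a ∧ ∃ i : ℕ, x = a * ω ^ i)) ∧
    (Odd q → ∀ x : F, x ≠ 0 →
      ((∃ a : F, a ≠ 0 ∧ a ^ (q ^ n) = a ∧ ∃ i : ℕ, x = a * ω ^ i) ∧
        ¬ (∃ a : F, a ≠ 0 ∧ a ^ (q ^ n) = a ∧ ∃ i : ℕ, x = a * ω ^ i * ω₀)) ∨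
      (¬ (∃ a : F, a ≠ 0 ∧ a ^ (q ^ n) = a ∧ ∃ i : ℕ, x = a * ω ^ i) ∧
        (∃ a : F, a ≠ 0 ∧ a ^ (q ^ n) = a ∧ ∃ i : ℕ, x = a * ω ^ i * ω₀))) := by
  have hq : 1 < q :=
    (Nat.one_lt_pow_iff (Nat.mul_ne_zero two_ne_zero hn.pos.ne')).mp (hF ▸ Fintype.one_lt_card)
  have hqn : q ^ n ≠ 0 := by positivity
  have hω₀0 : ω₀ ≠ 0 := by
    rintro rfl
    rw [orderOf_zero] at hω₀
    exact Nat.mul_ne_zero (by omega) (by omega) hω₀.symm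
  have hcard : ∀ x : F, x ≠ 0 → x ^ ((q ^ n - 1) * (q ^ n + 1)) = 1 := fun x hx => by
    rw [show (q ^ n - 1) * (q ^ n + 1) = Fintype.card F - 1 by
      rw [hF, mul_comm 2, pow_mul]; simpa [mul_comm] using (Nat.sq_sub_sq (q ^ n) 1).symm]
    exact FiniteField.pow_card_sub_one_eq_one x hx
  have hW : ∀ x : F, x ≠ 0 → (IsFixedMulPow (q ^ n) ω x ↔
      x ^ Nat.lcm (q ^ n - 1) (q ^ n + 1) = 1) := fun x hx => by
    rw [hω]
    exact isFixedMulPow_iff_pow_lcm_eq_one hqn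
      (IsPrimitiveRoot.pow_of_orderOf_eq_mul hω₀ (by omega)) hx
  refine ⟨fun hqe x hx => (hW x hx).mpr ?_, fun hqo x hx => ?_⟩
  · rw [Nat.lcm_sub_one_add_one_of_even hqn (hqe.pow_of_ne_zero hn.pos.ne')]
    exact hcard x hx
  rw [exists_eq_mul_mul_iff_isFixedMulPow_div hω₀0]
  change (IsFixedMulPow _ ω x ∧ ¬ _) ∨ (¬ IsFixedMulPow _ ω x ∧ _)
  rw [hW x hx, hW _ (div_ne_zero hx hω₀0)]
  refine pow_eq_one_xor_div_pow_eq_one (fun y hy => ?_) hω₀0 ?_ hx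
  · rw [Nat.two_mul_lcm_sub_one_add_one_of_odd hqo.pow]
    exact hcard y hy
  · rw [Ne, ← orderOf_dvd_iff_pow_eq_one, hω₀]
    exact Nat.not_pow_add_one_mul_sub_one_dvd_lcm hqo hq hn

/-- Lemma 2.1: With `ω₀` of order `(q^n+1)(q-1)` in `F_{q^{2n}}^*` and
`ω = ω₀^{q-1}`, set `W = F_{q^n}^* ⬝ ⟨ω⟩`.  If `q` is even then `W = F_{q^{2n}}^*`,
and if `q` is odd then `F_{q^{2n}}^*` is the disjoint union of `W` and `W·ω₀`. -/
theorem stmt0 {q n : ℕ} (hq : IsPrimePow q) (hn : Odd n) (hn0 : 0 < n)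
    {F : Type*} [Field F] [Fintype F] (hF : Fintype.card F = q ^ (2 * n))
    (ω₀ ω : F) (hω₀ : orderOf ω₀ = (q ^ n + 1) * (q - 1)) (hω : ω = ω₀ ^ (q - 1)) :
    (Even q → ∀ x : F, x ≠ 0 →
      (∃ a : F, a ≠ 0 ∧ a ^ (q ^ n) = a ∧ ∃ i : ℕ, x = a * ω ^ i)) ∧
    (Odd q → ∀ x : F, x ≠ 0 →
      ((∃ a : F, a ≠ 0 ∧ a ^ (q ^ n) = a ∧ ∃ i : ℕ, x = a * ω ^ i) ∧
        ¬ (∃ a : F, a ≠ 0 ∧ a ^ (q ^ n) = a ∧ ∃ i : ℕ, x = a * ω ^ i * ω₀)) ∨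
      (¬ (∃ a : F, a ≠ 0 ∧ a ^ (q ^ n) = a ∧ ∃ i : ℕ, x = a * ω ^ i) ∧
        (∃ a : F, a ≠ 0 ∧ a ^ (q ^ n) = a ∧ ∃ i : ℕ, x = a * ω ^ i * ω₀))) :=
  stmt0_general hn hF ω₀ ω hω₀ hω
end

section
/- Let q be a prime power and let x be an element of the field F_{q^6} such that x^{q^3+1} = 1 and x ∉ F_{q^2}. Then Tr_{F_{q^6}/F_{q^2}}(x) ≠ 1, where Tr denotes the relative field trace x ↦ x + x^{q^2} + x^{q^4}. -/
/-!
Write `a = x`, `b = x^{q^2}`, `c = x^{q^4}`. Since `x^{q^3} = x⁻¹` and `y ↦ y^{q^3}` is additive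
and commutes with `y ↦ y^{q^2}`, raising `a + b + c = 1` to the power `q^3` gives
`a⁻¹ + b⁻¹ + c⁻¹ = 1`. Together the two relations say `(1 - a)(1 - b)(1 - c) = 0`, and each of
`a = 1`, `b = 1`, `c = 1` forces `x = 1 ∈ F_{q^2}`.
-/

namespace FiniteField

variable {F : Type*} [Field F] [Fintype F]

theorem exists_ringChar_pow_eq_of_card_eq_pow {q k : ℕ} (hk : k ≠ 0)
    (hF : Fintype.card F = q ^ k) : ∃ m, ringChar F ^ m = q := by
  obtain ⟨n, hp, hcard⟩ := card F (ringChar F)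
  obtain ⟨m, -, hm⟩ := (Nat.dvd_prime_pow hp).mp (hcard ▸ hF ▸ dvd_pow_self q hk)
  exact ⟨m, hm.symm⟩

theorem add_pow_pow_of_card_eq_pow {q k : ℕ} (hk : k ≠ 0) (hF : Fintype.card F = q ^ k)
    (a b : F) (j : ℕ) : (a + b) ^ q ^ j = a ^ q ^ j + b ^ q ^ j := by
  obtain ⟨m, rfl⟩ := exists_ringChar_pow_eq_of_card_eq_pow hk hF
  have : Fact (ringChar F).Prime := ⟨CharP.char_is_prime F _⟩
  simp only [← pow_mul, add_pow_char_pow]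

end FiniteField

theorem eq_one_or_of_add_eq_one_of_inv_add_eq_one {K : Type*} [Field K] {a b c : K}
    (ha : a ≠ 0) (hb : b ≠ 0) (hc : c ≠ 0) (hsum : a + b + c = 1)
    (hsum_inv : a⁻¹ + b⁻¹ + c⁻¹ = 1) : a = 1 ∨ b = 1 ∨ c = 1 := by
  have hsym : b * c + a * c + a * b = a * b * c := by
    field_simp at hsum_inv
    linear_combination hsum_inv
  have hprod : (1 - a) * (1 - b) * (1 - c) = 0 := by linear_combination hsym - hsum
  simp only [mul_eq_zero, sub_eq_zero] at hprod
  rcases hprod with (h | h) | h <;> simp [← h]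

theorem stmt1_general {q : ℕ}
    {F : Type*} [Field F] [Fintype F] (hF : Fintype.card F = q ^ 6)
    (x : F) (hx : x ^ (q ^ 3 + 1) = 1) (hx2 : x ^ (q ^ 2) ≠ x) :
    x + x ^ (q ^ 2) + x ^ (q ^ 4) ≠ 1 := by
  intro htr
  have hx0 : x ≠ 0 := by rintro rfl; simp at hx
  have hxinv : x ^ q ^ 3 = x⁻¹ := eq_inv_of_mul_eq_one_left (by rwa [← pow_succ])
  have hconj_inv (j : ℕ) : (x ^ q ^ j) ^ q ^ 3 = (x ^ q ^ j)⁻¹ := by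
    rw [pow_right_comm, hxinv, inv_pow]
  have hsum_inv : x⁻¹ + (x ^ q ^ 2)⁻¹ + (x ^ q ^ 4)⁻¹ = 1 := by
    rw [← hxinv, ← hconj_inv, ← hconj_inv,
      ← FiniteField.add_pow_pow_of_card_eq_pow (by norm_num) hF,
      ← FiniteField.add_pow_pow_of_card_eq_pow (by norm_num) hF, htr, one_pow]
  have hfix (i j : ℕ) (hij : i + j = 6) (h : x ^ q ^ i = 1) : x = 1 := by
    rw [← FiniteField.pow_card x, hF, ← hij, pow_add, pow_mul, h, one_pow]
  apply hx2
  obtain h | h | h := eq_one_or_of_add_eq_one_of_inv_add_eq_one hx0 (pow_ne_zero _ hx0)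
    (pow_ne_zero _ hx0) htr hsum_inv
  · simp [h]
  · simp [hfix 2 4 rfl h]
  · simp [hfix 4 2 rfl h]

/-- Lemma 2.2: If `x ∈ F_{q^6}` satisfies `x^{q^3+1} = 1` and
`x ∉ F_{q^2}`, then `Tr_{F_{q^6}/F_{q^2}}(x) = x + x^{q^2} + x^{q^4} ≠ 1`. -/
theorem stmt1 {q : ℕ} (hq : IsPrimePow q)
    {F : Type*} [Field F] [Fintype F] (hF : Fintype.card F = q ^ 6)
    (x : F) (hx : x ^ (q ^ 3 + 1) = 1) (hx2 : x ^ (q ^ 2) ≠ x) :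
    x + x ^ (q ^ 2) + x ^ (q ^ 4) ≠ 1 :=
  stmt1_general hF x hx hx2
end

section
/- Define F(n,p) = C(n+p−2, n−1)² · (n+2p−2)/(n·pⁿ) for a positive integer n and prime p. If p > 3 and n ≥ (p+1)/2, or if p ≤ 3 and n ≥ p+1, then F(n+1,p) < F(n,p). -/
/-! The quotient `F(n+1,p) / F(n,p)` is a rational function of `n` and `p`, and it is `< 1` as
soon as the cubic `f_p(n) = n³ + (2p-3)n² - 3(p-1)n - 2p² + 3p - 1` is positive, because
`p n (n+1)(n+2p-2) - (n+p-1)²(n+2p-1) = (p-1) f_p(n)`. Viewed as a polynomial in `p`,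
`f_p(n) = p (2n² - 3n + 3 - 2p) + (n-1)³`, and for `p ≤ 2n - 1` the bracket is at least
`(2n-5)(n-1)`; both hypotheses of the theorem give `n ≥ 3` and `p + 1 ≤ 2n`. -/

/-- `F(n,p) = C(n+p-2,n-1)² · (n+2p-2)/(n·p^n)` as a rational number. -/
noncomputable def Fnp (n p : ℕ) : ℚ :=
  (Nat.choose (n + p - 2) (n - 1) : ℚ) ^ 2 * ((n : ℚ) + 2 * p - 2)
    / ((n : ℚ) * (p : ℚ) ^ n)

def FnpRatio (n p : ℚ) : ℚ :=
  (n + p - 1) ^ 2 * (n + 2 * p - 1) / (p * n * (n + 1) * (n + 2 * p - 2))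

def cubic (n p : ℚ) : ℚ :=
  n ^ 3 + (2 * p - 3) * n ^ 2 - 3 * (p - 1) * n - 2 * p ^ 2 + 3 * p - 1

theorem Fnp_pos (n p : ℕ) (hn : 0 < n) (hp : 0 < p) : 0 < Fnp n p := by
  have : 0 < (n + p - 2).choose (n - 1) := Nat.choose_pos (by omega)
  have : (1 : ℚ) ≤ n := by exact_mod_cast hn
  have : (1 : ℚ) ≤ p := by exact_mod_cast hp
  have : (0 : ℚ) < n + 2 * p - 2 := by linarith
  unfold Fnp
  positivity

theorem Fnp_succ (n p : ℕ) (hn : 0 < n) (hp : 0 < p) :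
    Fnp (n + 1) p = Fnp n p * FnpRatio n p := by
  have hchoose : ((n + p - 1).choose n : ℚ) * n = (n + p - 1) * (n + p - 2).choose (n - 1) := by
    obtain ⟨m, rfl⟩ : ∃ m, n = m + 1 := ⟨n - 1, by omega⟩
    obtain ⟨q, rfl⟩ : ∃ q, p = q + 1 := ⟨p - 1, by omega⟩
    rw [show m + 1 + (q + 1) - 1 = m + q + 1 by omega, show m + 1 + (q + 1) - 2 = m + q by omega,
      Nat.add_sub_cancel]
    have h : ((m + q + 1).choose (m + 1) * (m + 1) : ℚ) = (m + q + 1) * (m + q).choose m := by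
      exact_mod_cast (Nat.add_one_mul_choose_eq (m + q) m).symm
    push_cast
    linear_combination h
  have : (1 : ℚ) ≤ n := by exact_mod_cast hn
  have : (1 : ℚ) ≤ p := by exact_mod_cast hp
  unfold Fnp FnpRatio
  rw [show n + 1 + p - 2 = n + p - 1 by omega, Nat.add_sub_cancel,
    eq_div_of_mul_eq (by positivity) hchoose]
  push_cast
  set d : ℚ := n + 2 * p - 2
  have hd : d ≠ 0 := by linarith
  field_simp
  ring

theorem cubic_pos {n p : ℚ} (hn : 3 ≤ n) (hp : 0 ≤ p) (hpn : p + 1 ≤ 2 * n) :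
    0 < cubic n p := by
  have hcoeff : 0 ≤ 2 * n ^ 2 - 3 * n + 3 - 2 * p := by nlinarith
  have hcube : 0 < (n - 1) ^ 3 := pow_pos (by linarith) 3
  have hsplit : cubic n p = p * (2 * n ^ 2 - 3 * n + 3 - 2 * p) + (n - 1) ^ 3 := by
    unfold cubic; ring
  rw [hsplit]
  nlinarith [mul_nonneg hp hcoeff]

theorem FnpRatio_lt_one {n p : ℚ} (hn : 3 ≤ n) (hp : 1 < p) (hpn : p + 1 ≤ 2 * n) :
    FnpRatio n p < 1 := by
  have : 0 < n + 2 * p - 2 := by linarith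
  rw [FnpRatio, div_lt_one (by positivity)]
  have hgap : p * n * (n + 1) * (n + 2 * p - 2) - (n + p - 1) ^ 2 * (n + 2 * p - 1)
      = (p - 1) * cubic n p := by
    unfold cubic; ring
  have := mul_pos (sub_pos.2 hp) (cubic_pos hn (by linarith) hpn)
  linarith

theorem stmt5_general (n p : ℕ) (hp : p.Prime)
    (h : (3 < p ∧ p + 1 ≤ 2 * n) ∨ (p ≤ 3 ∧ p + 1 ≤ n)) :
    Fnp (n + 1) p < Fnp n p := by
  have hp2 := hp.two_le
  have hn : 3 ≤ n := by omega
  have hpn : p + 1 ≤ 2 * n := by omega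
  rw [Fnp_succ n p (by omega) hp.pos]
  exact mul_lt_of_lt_one_right (Fnp_pos n p (by omega) hp.pos)
    (FnpRatio_lt_one (by exact_mod_cast hn) (by exact_mod_cast hp2) (by exact_mod_cast hpn))

/-- Lemma 2.5(1): `F(n+1,p) < F(n,p)` if either `p > 3` and
`n ≥ (p+1)/2`, or `p ≤ 3` and `n ≥ p+1`. -/
theorem stmt5 (n p : ℕ) (hn : 0 < n) (hp : p.Prime)
    (h : (3 < p ∧ p + 1 ≤ 2 * n) ∨ (p ≤ 3 ∧ p + 1 ≤ n)) :
    Fnp (n + 1) p < Fnp n p :=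
  stmt5_general n p hp h
end

section
/- For every prime p > 45, F((p+1)/2, p) < 1, where F(n,p) = C(n+p−2, n−1)² · (n+2p−2)/(n·pⁿ). In particular, combined with the Blokhuis–Moorhouse bound, the Hermitian polar space H(n, q²) with q a power of p contains no ovoid when n ≥ (p+1)/2 and p > 45. -/
theorem Nat.choose_mul_pow_le_succ_pow (n k a : ℕ) : n.choose k * a ^ k ≤ (a + 1) ^ n := by
  rcases lt_or_ge n k with hnk | hkn
  · simp [Nat.choose_eq_zero_of_lt hnk]
  rw [add_pow]
  calc n.choose k * a ^ k = a ^ k * 1 ^ (n - k) * n.choose k := by ring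
    _ ≤ ∑ i ∈ Finset.range (n + 1), a ^ i * 1 ^ (n - i) * n.choose i :=
      Finset.single_le_sum (f := fun i => a ^ i * 1 ^ (n - i) * n.choose i)
        (fun _ _ => Nat.zero_le _) (Finset.mem_range.2 (Nat.lt_succ_of_le hkn))

theorem Nat.choose_three_mul_mul_four_pow_le (m : ℕ) : (3 * m).choose m * 4 ^ m ≤ 27 ^ m := by
  have h := Nat.choose_mul_pow_le_succ_pow (3 * m) (2 * m) 2
  rwa [Nat.choose_symm_of_eq_add (by ring), pow_mul, pow_mul] at h

theorem Nat.choose_three_mul_sq_mul_lt {m : ℕ} (hm : 23 ≤ m) :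
    (3 * m).choose m ^ 2 * (5 * m + 1) < (m + 1) * (2 * m + 1) ^ (m + 1) := by
  have hchoose : (3 * m).choose m ^ 2 * 16 ^ m ≤ 729 ^ m := by
    calc (3 * m).choose m ^ 2 * 16 ^ m = ((3 * m).choose m * 4 ^ m) ^ 2 := by
          rw [mul_pow, ← pow_mul, mul_comm m 2, pow_mul]; rfl
      _ ≤ (27 ^ m) ^ 2 := Nat.pow_le_pow_left (Nat.choose_three_mul_mul_four_pow_le m) 2
      _ = 729 ^ m := by rw [← pow_mul, mul_comm, pow_mul]; rfl
  refine Nat.lt_of_mul_lt_mul_right (a := 16 ^ m) ?_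
  calc (3 * m).choose m ^ 2 * (5 * m + 1) * 16 ^ m
        = (3 * m).choose m ^ 2 * 16 ^ m * (5 * m + 1) := by ring
    _ ≤ 729 ^ m * (5 * m + 1) := Nat.mul_le_mul_right _ hchoose
    _ < 729 ^ m * ((m + 1) * (2 * m + 1)) :=
        Nat.mul_lt_mul_of_pos_left (by nlinarith) (by positivity)
    _ ≤ (16 * (2 * m + 1)) ^ m * ((m + 1) * (2 * m + 1)) :=
        Nat.mul_le_mul_right _ (Nat.pow_le_pow_left (by omega) m)
    _ = (m + 1) * (2 * m + 1) ^ (m + 1) * 16 ^ m := by rw [mul_pow]; ring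

theorem Fnp_succ_two_mul_add_one (m : ℕ) :
    Fnp (m + 1) (2 * m + 1) =
      ((3 * m).choose m ^ 2 * (5 * m + 1) : ℕ) / ((m + 1) * (2 * m + 1) ^ (m + 1) : ℕ) := by
  rw [Fnp, show m + 1 + (2 * m + 1) - 2 = 3 * m by omega, Nat.add_sub_cancel]
  push_cast
  ring

/-- Lemma 2.5(2): for every prime `p > 45`, `F((p+1)/2, p) < 1`. -/
theorem stmt7 (p : ℕ) (hp : p.Prime) (hp45 : 45 < p) :
    Fnp ((p + 1) / 2) p < 1 := by
  obtain ⟨m, rfl⟩ := hp.odd_of_ne_two (by omega)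
  rw [show (2 * m + 1 + 1) / 2 = m + 1 by omega, Fnp_succ_two_mul_add_one,
    div_lt_one (by positivity)]
  exact_mod_cast Nat.choose_three_mul_sq_mul_lt (by omega)
end

section
/- Let q be an even prime power, n an odd integer ≥ 3, δ ∈ F_{q^2} with δ + δ^q = 1, and v = δ^{q+1} ∈ F_q*. Then the polynomial X² + X + v is irreducible over F_q, and for z = 1 + x + yδ with x, y ∈ F_{qⁿ}, the condition z^{qⁿ+1} = 1 is equivalent to x² + y²v + xy + y = 0, and the condition Tr_{F_{q^{2n}}/F_{q^2}}(z) = 1 is equivalent to Tr_{F_{qⁿ}/F_q}(x) = 0 and Tr_{F_{qⁿ}/F_q}(y) = 0. -/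
/-!
Since `q = 2 ^ k`, `x ↦ x ^ q` is additive and `δ ^ q = δ + 1`; hence
`δ ^ (q ^ m) = δ + m`, so `δ` is fixed by `x ↦ x ^ (q ^ 2)` and sent to `δ + 1` by
`x ↦ x ^ (q ^ n)`. A root `a ∈ F_q` of `X² + X + v` would make `b = δ + a` satisfy both
`b ^ 2 = b` and `b ^ q = b + 1`. The norm `z ^ (q ^ n + 1)` is
`(1 + x + y + yδ)(1 + x + yδ)`, expanded in characteristic 2. For the trace, `2` is invertible
modulo the odd `n`, so the exponents `q ^ (2i)` run over all `q ^ i` modulo the period `n` of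
`i ↦ x ^ (q ^ i)`; thus `Tr z = 1 + Tr x + (Tr y) δ` with `Tr x, Tr y ∈ F_q`, and `1, δ` are
independent over `F_q` because `δ ^ q ≠ δ`.
-/

open Finset Function

theorem IsPrimePow.exists_eq_two_pow_of_even {q : ℕ} (hq : IsPrimePow q) (heven : Even q) :
    ∃ k, q = 2 ^ k := by
  obtain ⟨p, k, hp, -, rfl⟩ := hq
  obtain rfl : p = 2 := (hp.nat_prime.even_iff).1 (Nat.even_pow.1 heven).1
  exact ⟨k, rfl⟩

namespace Function.Periodic

variable {M : Type*} [AddCommMonoid M] {f : ℕ → M} {n : ℕ}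

theorem sum_range_comp (hf : Periodic f n) {g : ℕ → ℕ}
    (hg : ∀ a < n, ∀ b < n, g a ≡ g b [MOD n] → a = b) :
    ∑ i ∈ range n, f (g i) = ∑ i ∈ range n, f i := by
  simp_rw [← hf.map_mod_nat (g _)]
  have hmaps : Set.MapsTo (fun i ↦ g i % n) (range n : Set ℕ) (range n) := fun i hi ↦
    mem_range.2 (Nat.mod_lt _ (Nat.zero_lt_of_lt (mem_range.1 hi)))
  have hinj : Set.InjOn (fun i ↦ g i % n) (range n : Set ℕ) := fun a ha b hb hab ↦
    hg a (mem_range.1 ha) b (mem_range.1 hb) hab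
  exact sum_nbij _ hmaps hinj (surjOn_of_injOn_of_card_le _ hmaps hinj le_rfl) fun _ _ ↦ rfl

theorem sum_range_add_one (hf : Periodic f n) :
    ∑ i ∈ range n, f (i + 1) = ∑ i ∈ range n, f i :=
  hf.sum_range_comp fun _ ha _ hb h ↦ (Nat.ModEq.add_right_cancel' 1 h).eq_of_lt_of_lt ha hb

theorem sum_range_mul (hf : Periodic f n) {c : ℕ} (hc : c.Coprime n) :
    ∑ i ∈ range n, f (c * i) = ∑ i ∈ range n, f i :=
  hf.sum_range_comp fun _ ha _ hb h ↦
    (Nat.ModEq.cancel_left_of_coprime (Nat.coprime_comm.1 hc) h).eq_of_lt_of_lt ha hb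

end Function.Periodic

theorem periodic_pow_pow {M : Type*} [Monoid M] {x : M} {q n : ℕ} (hx : x ^ q ^ n = x) :
    Periodic (fun i ↦ x ^ q ^ i) n := fun i ↦ by
  simp only [add_comm i, pow_add, pow_mul, hx]

section ExpChar

variable {R : Type*} [CommSemiring R] (p : ℕ) [ExpChar R p]

theorem add_pow_expChar_pow_pow (x y : R) (k m : ℕ) :
    (x + y) ^ (p ^ k) ^ m = x ^ (p ^ k) ^ m + y ^ (p ^ k) ^ m := by
  simp only [← pow_mul, add_pow_expChar_pow]

theorem sum_range_pow_pow_pow_expChar_pow {x : R} {k n : ℕ} (hx : x ^ (p ^ k) ^ n = x) :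
    (∑ i ∈ range n, x ^ (p ^ k) ^ i) ^ p ^ k = ∑ i ∈ range n, x ^ (p ^ k) ^ i := by
  rw [sum_pow_char_pow]
  refine (sum_congr rfl fun i _ ↦ ?_).trans (periodic_pow_pow hx).sum_range_add_one
  rw [pow_succ, pow_mul]

end ExpChar

namespace CharTwo

variable {R : Type*} [CommRing R] [CharP R 2] {k : ℕ} {b : R}

theorem pow_two_pow_pow_eq_add_natCast (hb : b ^ 2 ^ k = b + 1) (m : ℕ) :
    b ^ (2 ^ k) ^ m = b + m := by
  induction m with
  | zero => simp
  | succ m ih =>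
    have hm : (m : R) ^ 2 ^ k = m := map_natCast (iterateFrobenius R 2 k) m
    rw [pow_succ, pow_mul, ih, add_pow_char_pow (p := 2), hb, hm]
    push_cast
    ring

theorem add_sq_pow_two_pow_eq_self (hb : b ^ 2 ^ k = b + 1) : (b + b ^ 2) ^ 2 ^ k = b + b ^ 2 := by
  rw [add_pow_char_pow (p := 2), ← pow_mul, mul_comm, pow_mul, hb]
  linear_combination (b + 1) * two_eq_zero (R := R)

theorem sq_add_self_ne_zero (hb : b ^ 2 ^ k = b + 1) : b ^ 2 + b ≠ 0 := by
  intro h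
  have hidem : IsIdempotentElem b := by
    rw [IsIdempotentElem, ← sq]; linear_combination h - b * two_eq_zero (R := R)
  have hfix : b ^ 2 ^ k = b := by
    rw [← Nat.sub_add_cancel (Nat.one_le_two_pow (n := k))]; exact hidem.pow_succ_eq _
  have : Nontrivial R := CharP.nontrivial_of_char_ne_one (v := 2) (by norm_num)
  exact one_ne_zero (by linear_combination hb.symm.trans hfix : (1 : R) = 0)

theorem eq_zero_of_add_mul_eq_zero (hb : b ^ 2 ^ k = b + 1) {x y : R} (hx : x ^ 2 ^ k = x)
    (hy : y ^ 2 ^ k = y) (h : x + y * b = 0) : x = 0 ∧ y = 0 := by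
  have hconj : x + y * (b + 1) = 0 :=
    calc x + y * (b + 1) = (x + y * b) ^ 2 ^ k := by
          rw [add_pow_char_pow (p := 2), mul_pow, hx, hy, hb]
      _ = 0 := by rw [h, zero_pow (by positivity)]
  have hy0 : y = 0 := by linear_combination hconj - h
  exact ⟨by simpa [hy0] using h, hy0⟩

theorem one_add_add_mul_pow_pow_add_one {n : ℕ} (hn : Odd n) (hb : b ^ 2 ^ k = b + 1) {x y : R}
    (hx : x ^ (2 ^ k) ^ n = x) (hy : y ^ (2 ^ k) ^ n = y) :
    (1 + x + y * b) ^ ((2 ^ k) ^ n + 1) = 1 + (x ^ 2 + y ^ 2 * (b + b ^ 2) + x * y + y) := by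
  have hconj : (1 + x + y * b) ^ (2 ^ k) ^ n = 1 + x + y + y * b := by
    rw [add_pow_expChar_pow_pow 2, add_pow_expChar_pow_pow 2, mul_pow, one_pow, hx, hy,
      pow_two_pow_pow_eq_add_natCast hb, natCast_eq_one_of_odd_of_two_eq_zero hn two_eq_zero]
    ring
  rw [pow_succ, hconj]
  linear_combination (x + y * b + x * y * b) * two_eq_zero (R := R)

theorem sum_range_one_add_add_mul_pow_pow {n : ℕ} (hn : Odd n) (hb : b ^ 2 ^ k = b + 1) {x y : R}
    (hx : x ^ (2 ^ k) ^ n = x) (hy : y ^ (2 ^ k) ^ n = y) :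
    ∑ i ∈ range n, (1 + x + y * b) ^ ((2 ^ k) ^ 2) ^ i =
      1 + (∑ i ∈ range n, x ^ (2 ^ k) ^ i + (∑ i ∈ range n, y ^ (2 ^ k) ^ i) * b) := by
  have hterm (i : ℕ) : (1 + x + y * b) ^ ((2 ^ k) ^ 2) ^ i =
      1 + (x ^ (2 ^ k) ^ (2 * i) + y ^ (2 ^ k) ^ (2 * i) * b) := by
    rw [← pow_mul, add_pow_expChar_pow_pow 2, add_pow_expChar_pow_pow 2, mul_pow, one_pow,
      pow_two_pow_pow_eq_add_natCast hb]
    simp [add_assoc]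
  have hodd : Nat.Coprime 2 n := Nat.coprime_two_left.2 hn
  rw [sum_congr rfl fun i _ ↦ hterm i, sum_add_distrib, sum_add_distrib, ← sum_mul,
    (periodic_pow_pow hx).sum_range_mul hodd, (periodic_pow_pow hy).sum_range_mul hodd,
    sum_const, card_range, nsmul_one, natCast_eq_one_of_odd_of_two_eq_zero hn two_eq_zero]

end CharTwo

theorem stmt12_general (q n : ℕ) (hq : IsPrimePow q) (hqeven : Even q)
    (hn : Odd n)
    {F : Type*} [Field F] [Fintype F] (hF : Fintype.card F = q ^ (2 * n))
    (δ : F) (hδ : δ + δ ^ q = 1) :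
    (δ ^ (q + 1) ≠ 0 ∧ (δ ^ (q + 1)) ^ q = δ ^ (q + 1)) ∧
    (∀ a : F, a ^ q = a → a ^ 2 + a + δ ^ (q + 1) ≠ 0) ∧
    (∀ x y : F, x ^ (q ^ n) = x → y ^ (q ^ n) = y →
      (((1 + x + y * δ) ^ (q ^ n + 1) = 1) ↔
        x ^ 2 + y ^ 2 * δ ^ (q + 1) + x * y + y = 0) ∧
      ((∑ i ∈ Finset.range n, (1 + x + y * δ) ^ ((q ^ 2) ^ i)) = 1 ↔
        ((∑ i ∈ Finset.range n, x ^ (q ^ i)) = 0 ∧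
          (∑ i ∈ Finset.range n, y ^ (q ^ i)) = 0))) := by
  obtain ⟨k, rfl⟩ := hq.exists_eq_two_pow_of_even hqeven
  have : CharP F 2 := charP_of_card_eq_prime_pow (hF.trans (pow_mul 2 k _).symm)
  have hδq : δ ^ 2 ^ k = δ + 1 := by linear_combination hδ - δ * CharTwo.two_eq_zero (R := F)
  have hv : δ ^ (2 ^ k + 1) = δ + δ ^ 2 := by rw [pow_succ, hδq]; ring
  have hδ0 : δ ≠ 0 := by rintro rfl; simp at hδ
  refine ⟨⟨pow_ne_zero _ hδ0, hv ▸ CharTwo.add_sq_pow_two_pow_eq_self hδq⟩,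
    fun a ha hroot ↦ ?_, fun x y hx hy ↦ ⟨?_, ?_⟩⟩
  · have hb : (δ + a) ^ 2 ^ k = δ + a + 1 := by rw [add_pow_char_pow (p := 2), hδq, ha]; ring
    exact CharTwo.sq_add_self_ne_zero hb
      (by linear_combination hroot - hv + δ * a * CharTwo.two_eq_zero (R := F))
  · rw [CharTwo.one_add_add_mul_pow_pow_add_one hn hδq hx hy, hv, add_eq_left]
  · rw [CharTwo.sum_range_one_add_add_mul_pow_pow hn hδq hx hy, add_eq_left]
    exact ⟨CharTwo.eq_zero_of_add_mul_eq_zero hδq (sum_range_pow_pow_pow_expChar_pow 2 hx)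
      (sum_range_pow_pow_pow_expChar_pow 2 hy), fun ⟨hx0, hy0⟩ ↦ by simp [hx0, hy0]⟩

/-- computations inside the proof of Lemma 3.4: let `q` be an even
prime power, `n ≥ 3` odd, `δ ∈ F_{q^2}` with `δ + δ^q = 1`, and `v = δ^{q+1}`.
Then `v ∈ F_q^*`, the polynomial `X² + X + v` is irreducible over `F_q`
(equivalently, being quadratic, it has no root in `F_q`), and for
`z = 1 + x + yδ` with `x, y ∈ F_{q^n}`:
`z^{q^n+1} = 1` iff `x² + y²v + xy + y = 0`, and
`Tr_{F_{q^{2n}}/F_{q^2}}(z) = 1` iff `Tr_{F_{q^n}/F_q}(x) = 0` and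
`Tr_{F_{q^n}/F_q}(y) = 0`. -/
theorem stmt12 (q n : ℕ) (hq : IsPrimePow q) (hqeven : Even q)
    (hn : Odd n) (hn3 : 3 ≤ n)
    {F : Type*} [Field F] [Fintype F] (hF : Fintype.card F = q ^ (2 * n))
    (δ : F) (hδmem : δ ^ (q ^ 2) = δ) (hδ : δ + δ ^ q = 1) :
    (δ ^ (q + 1) ≠ 0 ∧ (δ ^ (q + 1)) ^ q = δ ^ (q + 1)) ∧
    (∀ a : F, a ^ q = a → a ^ 2 + a + δ ^ (q + 1) ≠ 0) ∧
    (∀ x y : F, x ^ (q ^ n) = x → y ^ (q ^ n) = y →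
      (((1 + x + y * δ) ^ (q ^ n + 1) = 1) ↔
        x ^ 2 + y ^ 2 * δ ^ (q + 1) + x * y + y = 0) ∧
      ((∑ i ∈ Finset.range n, (1 + x + y * δ) ^ ((q ^ 2) ^ i)) = 1 ↔
        ((∑ i ∈ Finset.range n, x ^ (q ^ i)) = 0 ∧
          (∑ i ∈ Finset.range n, y ^ (q ^ i)) = 0))) :=
  stmt12_general q n hq hqeven hn hF δ hδ
end
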